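/- If W is a non-backtracking walk from a directed edge e to its reversal -e, then the signed weight satisfies w(W) = -w(-W), where -W is the reversed walk; if W is a non-backtracking walk from e back to e, then w(W) = w(-W). -/

import Mathlib

open Complex

noncomputable section

attribute [local instance] Classical.propDecidable

/-- Reversal of a directed edge `(z, w) ↦ (w, z)`. -/
def rev (e : ℂ × ℂ) : ℂ × ℂ := (e.2, e.1)

/-- The undirected edge underlying a directed edge. -/
def ue (e : ℂ × ℂ) : Sym2 ℂ := s(e.1, e.2)

/-- The turning angle `∠(e, g) = Arg((h(g) - t(g)) / (h(e) - t(e))) ∈ (-π, π]`. -/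
def ang (e g : ℂ × ℂ) : ℝ := Complex.arg ((g.2 - g.1) / (e.2 - e.1))

/-- The list of consecutive steps of a walk, recorded as a list of pairs of directed edges. -/
def steps (l : List (ℂ × ℂ)) : List ((ℂ × ℂ) × (ℂ × ℂ)) := l.zip l.tail

/-- The total turning angle `α(W)` of a walk. -/
def totalAngle (l : List (ℂ × ℂ)) : ℝ := ((steps l).map fun p => ang p.1 p.2).sum

/-- The signed weight `w(W) = exp(i α(W)/2) ∏_{i<n} x_{e_i}` of a walk
(the last edge is not counted in the product of edge weights). -/
def wt (x : Sym2 ℂ → ℝ) (l : List (ℂ × ℂ)) : ℂ :=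
  Complex.exp (Complex.I * (totalAngle l : ℂ) / 2) *
    ((l.dropLast).map fun e => (x (ue e) : ℂ)).prod

/-- A non-backtracking walk in the directed edge set `D`: a nonempty sequence of directed
edges of `D` such that consecutive edges are head-to-tail and never exact reversals. -/
def IsWalk (D : Set (ℂ × ℂ)) (l : List (ℂ × ℂ)) : Prop :=
  l ≠ [] ∧ (∀ e ∈ l, e ∈ D) ∧ List.Chain' (fun a b => a.2 = b.1 ∧ b ≠ rev a) l

/-- A non-backtracking walk from the directed edge `e` to the directed edge `g`. -/
def WalkFrom (D : Set (ℂ × ℂ)) (e g : ℂ × ℂ) (l : List (ℂ × ℂ)) : Prop :=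
  IsWalk D l ∧ l.head? = some e ∧ l.getLast? = some g

/-- The reversed walk `-W`. -/
def revWalk (l : List (ℂ × ℂ)) : List (ℂ × ℂ) := (l.map rev).reverse

/-- The Kac-Ward transition coefficient
`Λ_{e,g} = x_e exp(i ∠(e,g)/2)` if `h(e) = t(g)` and `g ≠ -e`, and `0` otherwise. -/
def KWtrans (D : Set (ℂ × ℂ)) (x : Sym2 ℂ → ℝ) (e g : ℂ × ℂ) : ℂ :=
  if e ∈ D ∧ g ∈ D ∧ e.2 = g.1 ∧ g ≠ rev e then
    (x (ue e) : ℂ) * Complex.exp (Complex.I * (ang e g : ℂ) / 2)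
  else 0

/-- Number of times a walk goes through a given undirected edge
(the final edge of a walk is not counted as "gone through"). -/
def throughCount (l : List (ℂ × ℂ)) (t : Sym2 ℂ) : ℕ :=
  ((l.dropLast).filter fun a => ue a = t).length

/-- A graph embedded in the plane, presented by its (symmetric) set of directed edges.
Edges are nondegenerate segments, and, since two edges of a graph overlap in at most one
point, an edge is never continued by an edge turning by exactly the angle `π`
(i.e. the direction ratio of consecutive distinct edges is never a nonpositive real). -/
structure PlaneGraph where
  D : Set (ℂ × ℂ)
  nd : ∀ e ∈ D, e.1 ≠ e.2
  symm : ∀ e ∈ D, rev e ∈ D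
  noHalfTurn : ∀ e ∈ D, ∀ g ∈ D, e.2 = g.1 → g ≠ rev e →
    ¬(((g.2 - g.1) / (e.2 - e.1)).im = 0 ∧ ((g.2 - g.1) / (e.2 - e.1)).re < 0)

/-!
Reversing a walk replaces each turn `∠(e, g) = Arg z` by `∠(-g, -e) = Arg z⁻¹`, and this is
`-Arg z` because a plane graph has no half turns; hence `α(-W) = -α(W)`. The edge weights
counted by `W` and `-W` differ only by trading the first edge for the last, and these carry the
same weight when the last edge is `±e`. So `w(W) = exp(iα(W)) w(-W)`, and `exp(iα(W))`
telescopes to the ratio of the unit directions of the last and the first edge, which is `-1` for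
a walk ending at `-e` and `1` for a walk ending at `e`.
-/

lemma ue_rev (e : ℂ × ℂ) : ue (rev e) = ue e := Sym2.eq_swap

def unitDir (e : ℂ × ℂ) : ℂ := (e.2 - e.1) / ‖e.2 - e.1‖

lemma unitDir_rev (e : ℂ × ℂ) : unitDir (rev e) = -unitDir e := by
  rw [unitDir, unitDir, rev, ← neg_sub, norm_neg, neg_div]

lemma unitDir_ne_zero {e : ℂ × ℂ} (h : e.1 ≠ e.2) : unitDir e ≠ 0 := by
  have : e.2 - e.1 ≠ 0 := sub_ne_zero.mpr h.symm
  simpa [unitDir] using this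

lemma Complex.exp_arg_div_mul_I {z w : ℂ} (hz : z ≠ 0) (hw : w ≠ 0) :
    exp (arg (w / z) * I) = w / ‖w‖ / (z / ‖z‖) := by
  have h := norm_mul_exp_arg_mul_I (w / z)
  have hz' : (‖z‖ : ℂ) ≠ 0 := by exact_mod_cast norm_ne_zero_iff.mpr hz
  have hw' : (‖w‖ : ℂ) ≠ 0 := by exact_mod_cast norm_ne_zero_iff.mpr hw
  rw [norm_div, ofReal_div] at h
  field_simp at h ⊢
  linear_combination h

lemma exp_ang {a b : ℂ × ℂ} (ha : a.1 ≠ a.2) (hb : b.1 ≠ b.2) :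
    exp (I * ang a b) = unitDir b / unitDir a := by
  rw [ang, mul_comm, exp_arg_div_mul_I (sub_ne_zero.mpr ha.symm) (sub_ne_zero.mpr hb.symm)]
  rfl

lemma ang_rev_rev {a b : ℂ × ℂ} (h : arg ((b.2 - b.1) / (a.2 - a.1)) ≠ Real.pi) :
    ang (rev b) (rev a) = -ang a b := by
  have hinv : (a.1 - a.2) / (b.1 - b.2) = ((b.2 - b.1) / (a.2 - a.1))⁻¹ := by
    rw [inv_div, ← neg_sub a.2, ← neg_sub b.2, neg_div_neg_eq]
  rw [ang, ang, rev, rev, hinv, arg_inv, if_neg h]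

lemma totalAngle_singleton (a : ℂ × ℂ) : totalAngle [a] = 0 := by
  simp [totalAngle, steps]

lemma totalAngle_cons_cons (a b : ℂ × ℂ) (l : List (ℂ × ℂ)) :
    totalAngle (a :: b :: l) = ang a b + totalAngle (b :: l) := by
  simp [totalAngle, steps]

lemma totalAngle_append_pair (l : List (ℂ × ℂ)) (a b : ℂ × ℂ) :
    totalAngle (l ++ [a, b]) = totalAngle (l ++ [a]) + ang a b := by
  induction l with
  | nil => simp [totalAngle_cons_cons, totalAngle_singleton]
  | cons c l ih =>
    rcases l with _ | ⟨d, l⟩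
    · simp [totalAngle_cons_cons, totalAngle_singleton]
    · simp only [List.cons_append, totalAngle_cons_cons] at ih ⊢
      rw [ih, add_assoc]

lemma totalAngle_revWalk_of_isChain {l : List (ℂ × ℂ)}
    (h : l.IsChain fun a b => ang (rev b) (rev a) = -ang a b) :
    totalAngle (revWalk l) = -totalAngle l := by
  induction l with
  | nil => simp [revWalk, totalAngle, steps]
  | cons a l ih =>
    rcases l with _ | ⟨b, l⟩
    · simp [revWalk, totalAngle_singleton]
    · rw [List.isChain_cons_cons] at h
      have hrev : revWalk (a :: b :: l) = revWalk l ++ [rev b, rev a] := by simp [revWalk]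
      have hrev' : revWalk (b :: l) = revWalk l ++ [rev b] := by simp [revWalk]
      rw [hrev, totalAngle_append_pair, ← hrev', ih h.2, h.1, totalAngle_cons_cons]
      ring

lemma exp_totalAngle_cons (a : ℂ × ℂ) (l : List (ℂ × ℂ)) (hl : ∀ e ∈ a :: l, e.1 ≠ e.2) :
    exp (I * totalAngle (a :: l)) =
      unitDir ((a :: l).getLast (List.cons_ne_nil a l)) / unitDir a := by
  induction l generalizing a with
  | nil => simp [totalAngle_singleton, unitDir_ne_zero (hl a (by simp))]
  | cons b l ih =>
    have ha := hl a (by simp)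
    have hb := hl b (by simp)
    rw [totalAngle_cons_cons, List.getLast_cons_cons, ofReal_add, mul_add, exp_add, exp_ang ha hb,
      ih b (fun e he => hl e (List.mem_cons_of_mem a he))]
    field_simp [unitDir_ne_zero ha, unitDir_ne_zero hb]

theorem List.prod_map_dropLast_eq_prod_map_tail {α M : Type*} [CommMonoid M] (f : α → M)
    {l : List α} (h : l.head?.map f = l.getLast?.map f) :
    (l.dropLast.map f).prod = (l.tail.map f).prod := by
  rcases l with _ | ⟨a, l⟩
  · rfl
  rcases l.eq_nil_or_concat' with rfl | ⟨m, b, rfl⟩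
  · rfl
  rw [← cons_append, getLast?_concat] at h
  have hab : f a = f b := by simpa using h
  rw [← cons_append, dropLast_concat]
  simp [hab, mul_comm]

lemma prod_map_revWalk {M : Type*} [CommMonoid M] {f : ℂ × ℂ → M} (hf : ∀ a, f (rev a) = f a)
    (l : List (ℂ × ℂ)) : ((revWalk l).map f).prod = (l.map f).prod := by
  simp [revWalk, List.map_reverse, List.prod_reverse, Function.comp_def, hf]

lemma dropLast_revWalk (l : List (ℂ × ℂ)) : (revWalk l).dropLast = revWalk l.tail := by
  simp [revWalk, List.dropLast_reverse, List.map_tail]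

lemma wt_eq_exp_mul_wt_revWalk (x : Sym2 ℂ → ℝ) {l : List (ℂ × ℂ)}
    (hα : totalAngle (revWalk l) = -totalAngle l) (hends : l.head?.map ue = l.getLast?.map ue) :
    wt x l = exp (I * totalAngle l) * wt x (revWalk l) := by
  have hprod : ((revWalk l).dropLast.map fun e => (x (ue e) : ℂ)).prod =
      (l.dropLast.map fun e => (x (ue e) : ℂ)).prod := by
    rw [dropLast_revWalk, prod_map_revWalk (fun a => by rw [ue_rev]),
      List.prod_map_dropLast_eq_prod_map_tail]
    simpa only [Option.map_map, Function.comp_def] using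
      congrArg (Option.map fun t => (x t : ℂ)) hends
  rw [wt, wt, hα, hprod, ← mul_assoc, ← exp_add]
  congr 2
  push_cast
  ring

namespace PlaneGraph

variable (Γ : PlaneGraph)

lemma ang_rev_rev_of_mem {a b : ℂ × ℂ} (ha : a ∈ Γ.D) (hb : b ∈ Γ.D) (hab : a.2 = b.1)
    (hba : b ≠ rev a) : ang (rev b) (rev a) = -ang a b :=
  ang_rev_rev fun h => Γ.noHalfTurn a ha b hb hab hba (arg_eq_pi_iff.mp h).symm

lemma totalAngle_revWalk {l : List (ℂ × ℂ)} (hl : IsWalk Γ.D l) :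
    totalAngle (revWalk l) = -totalAngle l :=
  totalAngle_revWalk_of_isChain <| hl.2.2.imp_of_mem_imp fun a b ha hb ⟨hab, hba⟩ =>
    Γ.ang_rev_rev_of_mem (hl.2.1 a ha) (hl.2.1 b hb) hab hba

lemma exp_totalAngle {e g : ℂ × ℂ} {l : List (ℂ × ℂ)} (hl : WalkFrom Γ.D e g l) :
    exp (I * totalAngle l) = unitDir g / unitDir e := by
  obtain ⟨⟨-, hmem, -⟩, hhead, hlast⟩ := hl
  rcases l with _ | ⟨a, l⟩
  · simp at hhead
  obtain rfl : a = e := by simpa using hhead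
  rw [List.getLast?_eq_some_getLast (List.cons_ne_nil a l), Option.some_inj] at hlast
  rw [exp_totalAngle_cons a l fun f hf => Γ.nd f (hmem f hf), hlast]

lemma wt_eq_unitDir_div_mul_wt_revWalk (x : Sym2 ℂ → ℝ) {e g : ℂ × ℂ} {l : List (ℂ × ℂ)}
    (hl : WalkFrom Γ.D e g l) (hg : ue g = ue e) :
    wt x l = unitDir g / unitDir e * wt x (revWalk l) := by
  rw [← Γ.exp_totalAngle hl]
  refine wt_eq_exp_mul_wt_revWalk x (Γ.totalAngle_revWalk hl.1) ?_
  rw [hl.2.1, hl.2.2, Option.map_some, Option.map_some, hg]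

end PlaneGraph

theorem weight_of_reversed_walk_general
    (Γ : PlaneGraph) (x : Sym2 ℂ → ℝ)
    (e : ℂ × ℂ) (l : List (ℂ × ℂ)) :
    (WalkFrom Γ.D e (rev e) l → wt x l = - wt x (revWalk l)) ∧
    (WalkFrom Γ.D e e l → wt x l = wt x (revWalk l)) := by
  have hdir : ∀ {g}, WalkFrom Γ.D e g l → unitDir e ≠ 0 := fun hl =>
    unitDir_ne_zero (Γ.nd e (hl.1.2.1 e (List.mem_of_mem_head? hl.2.1)))
  refine ⟨fun hl => ?_, fun hl => ?_⟩
  · rw [Γ.wt_eq_unitDir_div_mul_wt_revWalk x hl (ue_rev e), unitDir_rev, neg_div,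
      div_self (hdir hl), neg_one_mul]
  · rw [Γ.wt_eq_unitDir_div_mul_wt_revWalk x hl rfl, div_self (hdir hl), one_mul]

/-- for a walk from `e` to `-e` one has `w(W) = -w(-W)`, and for a walk
from `e` back to `e` one has `w(W) = w(-W)`. -/
theorem weight_of_reversed_walk
    (Γ : PlaneGraph) (x : Sym2 ℂ → ℝ) (hx : ∀ t : Sym2 ℂ, 0 < x t)
    (e : ℂ × ℂ) (l : List (ℂ × ℂ)) :
    (WalkFrom Γ.D e (rev e) l → wt x l = - wt x (revWalk l)) ∧
    (WalkFrom Γ.D e e l → wt x l = wt x (revWalk l)) :=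
  weight_of_reversed_walk_general Γ x e l
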